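/- For every real C > 0 there exists n₀ such that the following holds for all n ≥ n₀. If G is a (p,α)-jumbled graph on n vertices with α ≤ C·√(pn) and pn ≥ (200C + 10)^{2/3}·n^{2/3}, then G contains the Petersen graph as a subgraph. -/

import Mathlib

/-- A graph `G` is `(p, α)`-jumbled if for all vertex subsets `X, Y` we have
`|e(X,Y) - p|X||Y|| ≤ α √(|X||Y|)`. -/
def IsJumbled {V : Type*} [Fintype V] [DecidableEq V] (G : SimpleGraph V) [DecidableRel G.Adj]
    (p α : ℝ) : Prop :=
  ∀ X Y : Finset V,
    |((SimpleGraph.interedges G X Y).card : ℝ) - p * X.card * Y.card| ≤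
      α * Real.sqrt ((X.card : ℝ) * Y.card)

/-- The Petersen graph: vertices are the 2-element subsets of a 5-element set,
adjacent iff disjoint. -/
def petersen : SimpleGraph {s : Finset (Fin 5) // s.card = 2} where
  Adj a b := Disjoint (a : Finset (Fin 5)) (b : Finset (Fin 5))
  symm := ⟨fun _ _ h => h.symm⟩
  loopless := ⟨by
    rintro ⟨a, ha⟩ h
    have : a = ∅ := disjoint_self.mp h
    simp [this] at ha⟩

/-- `G` contains a copy of `F`. -/
def ContainsCopy {W V : Type*} (F : SimpleGraph W) (G : SimpleGraph V) : Prop :=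
  ∃ f : W → V, Function.Injective f ∧ ∀ a b, F.Adj a b → G.Adj (f a) (f b)

/-!
Greedy embedding. Call `x` deficient in `T` if it has fewer than `p |T| / 2` neighbours in `T`.
Jumbledness gives two counting facts: at most `4 α² / (p² |T|)` vertices are deficient in `T`, and
two sets with at least `m` elements each span an edge as soon as `α < p m`. The hypotheses give
`200 α ≤ p² n` and `p³ n ≥ (200 C + 10)² ≥ 100`, which makes all exceptional sets small.

Write the Petersen graph as a hexagon `c₀ … c₅` whose opposite vertices `cᵢ, cᵢ₊₃` have a common
neighbour `yᵢ`, the `yᵢ` having a common neighbour `z`. Choose a path `c₀ c₁ c₂ c₃` of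
vertices not deficient in `V`, with `c₃` not deficient in `N(c₀)`, and close the hexagon by an edge
between the suitably non-deficient parts of `N(c₃)` and `N(c₀)`; then opposite vertices have at least `p² n / 4`
common neighbours. A vertex `z` deficient in none of these three common neighbourhoods has at least
`p³ n / 8 > 9` neighbours in each of them, leaving room for distinct `y₀, y₁, y₂`.
-/

open Finset

section Avoiding

variable {W : Type*} [DecidableEq W]

lemma cast_card_union_le (A B : Finset W) : (#(A ∪ B) : ℝ) ≤ #A + #B := by
  exact_mod_cast card_union_le A B

lemma le_card_sdiff_union_toFinset (S B : Finset W) (l : List W) :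
    (#S : ℝ) - #B - l.length ≤ #(S \ (B ∪ l.toFinset)) := by
  have h₁ := card_le_card_sdiff_add_card (s := S) (t := B ∪ l.toFinset)
  have h₂ := card_union_le B l.toFinset
  have h₃ := l.toFinset_card_le
  have : #S ≤ #(S \ (B ∪ l.toFinset)) + #B + l.length := by omega
  have : (#S : ℝ) ≤ #(S \ (B ∪ l.toFinset)) + #B + l.length := by exact_mod_cast this
  linarith

lemma exists_mem_notMem_of_length_lt {S : Finset W} (l : List W) (h : l.length < #S) :
    ∃ x ∈ S, x ∉ l := by
  obtain ⟨x, hx, hxl⟩ := exists_mem_notMem_of_card_lt_card (l.toFinset_card_le.trans_lt h)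
  exact ⟨x, hx, by simpa using hxl⟩

lemma exists_mem_notMem_of_card_add_length_lt {S B : Finset W} (l : List W)
    (h : (#B : ℝ) + l.length < #S) : ∃ x ∈ S, x ∉ B ∧ x ∉ l := by
  have h' : #B + l.length < #S := by exact_mod_cast h
  obtain ⟨x, hx, hxl⟩ := exists_mem_notMem_of_length_lt (S := S \ B) l
    (by have := le_card_sdiff B S; omega)
  rw [mem_sdiff] at hx
  exact ⟨x, hx.1, hx.2, hxl⟩

end Avoiding

/-- The Petersen graph on `Fin 10`: the hexagon `0, …, 5`, the vertex `7 + i` joined to the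
opposite vertices `i, i + 3`, and `6` joined to `7, 8, 9`. -/
def hexEdges : List (Fin 10 × Fin 10) :=
  [(0, 1), (1, 2), (2, 3), (3, 4), (4, 5), (0, 5), (0, 7), (3, 7), (1, 8), (4, 8), (2, 9), (5, 9),
    (6, 7), (6, 8), (6, 9)]

def petersenLabel : Fin 10 → {s : Finset (Fin 5) // s.card = 2} :=
  ![⟨{0, 1}, rfl⟩, ⟨{2, 3}, rfl⟩, ⟨{0, 4}, rfl⟩, ⟨{1, 2}, rfl⟩, ⟨{0, 3}, rfl⟩, ⟨{2, 4}, rfl⟩,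
    ⟨{0, 2}, rfl⟩, ⟨{3, 4}, rfl⟩, ⟨{1, 4}, rfl⟩, ⟨{1, 3}, rfl⟩]

lemma petersenLabel_bijective : Function.Bijective petersenLabel := by decide

lemma mem_hexEdges_of_petersen_adj (i j : Fin 10)
    (h : petersen.Adj (petersenLabel i) (petersenLabel j)) :
    (i, j) ∈ hexEdges ∨ (j, i) ∈ hexEdges := by
  revert i j
  show ∀ i j, Disjoint (petersenLabel i).1 (petersenLabel j).1 → _
  decide

lemma containsCopy_petersen_of_hexEdges {V : Type*} {G : SimpleGraph V} {x : Fin 10 → V}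
    (hx : Function.Injective x) (hadj : ∀ e ∈ hexEdges, G.Adj (x e.1) (x e.2)) :
    ContainsCopy petersen G := by
  let e := Equiv.ofBijective _ petersenLabel_bijective
  refine ⟨x ∘ e.symm, hx.comp e.symm.injective, fun a b hab => ?_⟩
  rw [← e.apply_symm_apply a, ← e.apply_symm_apply b] at hab
  rcases mem_hexEdges_of_petersen_adj _ _ hab with h | h
  · exact hadj _ h
  · exact (hadj _ h).symm

lemma containsCopy_petersen_of_adj {V : Type*} {G : SimpleGraph V}
    {c₀ c₁ c₂ c₃ c₄ c₅ z y₀ y₁ y₂ : V}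
    (hnodup : [y₂, y₁, y₀, z, c₅, c₄, c₃, c₂, c₁, c₀].Nodup)
    (h₀₁ : G.Adj c₀ c₁) (h₁₂ : G.Adj c₁ c₂) (h₂₃ : G.Adj c₂ c₃) (h₃₄ : G.Adj c₃ c₄)
    (h₄₅ : G.Adj c₄ c₅) (h₀₅ : G.Adj c₀ c₅) (hy₀ : G.Adj c₀ y₀ ∧ G.Adj c₃ y₀)
    (hy₁ : G.Adj c₁ y₁ ∧ G.Adj c₄ y₁) (hy₂ : G.Adj c₂ y₂ ∧ G.Adj c₅ y₂)
    (hz : G.Adj z y₀ ∧ G.Adj z y₁ ∧ G.Adj z y₂) :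
    ContainsCopy petersen G := by
  refine containsCopy_petersen_of_hexEdges (x := ![c₀, c₁, c₂, c₃, c₄, c₅, z, y₀, y₁, y₂]) ?_ ?_
  · rw [← List.nodup_ofFn, ← List.nodup_reverse]
    exact hnodup
  · simp [hexEdges, *]

variable {V : Type*} [Fintype V] {G : SimpleGraph V} [DecidableRel G.Adj] {p α : ℝ}

namespace SimpleGraph

noncomputable def deficient (G : SimpleGraph V) [DecidableRel G.Adj] (p : ℝ) (T : Finset V) :
    Finset V :=
  {x | (#{y ∈ T | G.Adj x y} : ℝ) < p * #T / 2}

lemma notMem_deficient {T : Finset V} {x : V} :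
    x ∉ G.deficient p T ↔ p * #T / 2 ≤ #{y ∈ T | G.Adj x y} := by
  simp [deficient]

lemma notMem_deficient_univ {x : V} :
    x ∉ G.deficient p univ ↔ p * Fintype.card V / 2 ≤ #{y | G.Adj x y} := by
  rw [notMem_deficient, card_univ]

lemma card_interedges_deficient_le (T : Finset V) :
    (#(G.interedges (G.deficient p T) T) : ℝ) ≤ #(G.deficient p T) * (p * #T / 2) := by
  classical
  refine (Nat.cast_le.2 <| (card_le_card <| subset_of_eq (Rel.interedges_eq_biUnion _)).trans
    card_biUnion_le).trans ?_
  simp_rw [Nat.cast_sum, card_map]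
  refine (sum_le_card_nsmul _ _ _ fun x hx => (mem_filter.1 hx).2.le).trans ?_
  simp

lemma le_card_filter_adj_and_adj (hp : 0 ≤ p) {x y : V} (hx : x ∉ G.deficient p univ)
    (hy : y ∉ G.deficient p {z | G.Adj x z}) :
    p ^ 2 * Fintype.card V / 4 ≤ #{z | G.Adj x z ∧ G.Adj y z} := by
  rw [notMem_deficient_univ] at hx
  rw [notMem_deficient, filter_filter] at hy
  nlinarith

end SimpleGraph

open SimpleGraph

namespace IsJumbled

variable [DecidableEq V]

lemma interedges_nonempty (hj : IsJumbled G p α) {X Y : Finset V}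
    (h : α * √(#X * #Y) < p * #X * #Y) : (G.interedges X Y).Nonempty := by
  rw [← card_pos, ← Nat.cast_pos (α := ℝ)]
  linarith [(abs_le.1 (hj X Y)).1]

lemma exists_adj_of_le_card (hj : IsJumbled G p α) (hp : 0 ≤ p) {X Y : Finset V} {m : ℝ}
    (hm : 0 < m) (hX : m ≤ #X) (hY : m ≤ #Y) (hα : α < p * m) :
    ∃ x ∈ X, ∃ y ∈ Y, G.Adj x y := by
  obtain ⟨⟨x, y⟩, hxy⟩ := hj.interedges_nonempty (X := X) (Y := Y) (by
    set s := √(#X * #Y : ℝ)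
    have hs : m ≤ s := Real.le_sqrt_of_sq_le (by nlinarith)
    calc α * s < p * m * s := mul_lt_mul_of_pos_right hα (hm.trans_le hs)
      _ ≤ p * s * s := by gcongr
      _ = p * #X * #Y := by rw [mul_assoc, Real.mul_self_sqrt (by positivity), mul_assoc])
  obtain ⟨hx, hy, h⟩ := G.mem_interedges_iff.1 hxy
  exact ⟨x, hx, y, hy, h⟩

lemma card_deficient_mul_le (hj : IsJumbled G p α) (hp : 0 ≤ p) (T : Finset V) :
    p ^ 2 * #T * #(G.deficient p T) ≤ 4 * α ^ 2 := by
  set B := G.deficient p T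
  have hlow := (abs_le.1 (hj B T)).1
  have hup := G.card_interedges_deficient_le (p := p) T
  have hprod : 0 ≤ (#B : ℝ) * #T := by positivity
  have key : p * (#B * #T) / 2 ≤ α * √(#B * #T) := by nlinarith
  have hsq := pow_le_pow_left₀ (by positivity) key 2
  rw [mul_pow, Real.sq_sqrt hprod] at hsq
  rcases hprod.eq_or_lt with h0 | hpos
  · have : p ^ 2 * #T * #B = p ^ 2 * (#B * #T : ℝ) := by ring
    rw [this, ← h0, mul_zero]; positivity
  · nlinarith

lemma card_deficient_le_of_le_card (hj : IsJumbled G p α) (hp : 0 < p) (hα₀ : 0 ≤ α)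
    (hα : 200 * α ≤ p ^ 2 * Fintype.card V) {T : Finset V} {c : ℝ} (hc : 0 < c) (hT : c ≤ #T) :
    (#(G.deficient p T) : ℝ) ≤ p ^ 2 * Fintype.card V ^ 2 / (10000 * c) := by
  have h := hj.card_deficient_mul_le hp.le T
  have hα2 : 40000 * α ^ 2 ≤ (p ^ 2 * Fintype.card V) ^ 2 := by nlinarith
  rw [le_div_iff₀ (by positivity)]
  have : p ^ 2 * (#(G.deficient p T) * (10000 * c)) ≤ p ^ 2 * (p ^ 2 * Fintype.card V ^ 2) := by
    nlinarith [mul_le_mul_of_nonneg_right hT (by positivity : (0 : ℝ) ≤ p ^ 2 * #(G.deficient p T))]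
  exact le_of_mul_le_mul_left this (by positivity)

lemma card_deficient_le_of_half_le (hj : IsJumbled G p α) (hp : 0 < p) (hα₀ : 0 ≤ α)
    (hα : 200 * α ≤ p ^ 2 * Fintype.card V) (hpn : 0 < p * Fintype.card V) {T : Finset V}
    (hT : p * Fintype.card V / 2 ≤ #T) :
    (#(G.deficient p T) : ℝ) ≤ p * Fintype.card V / 5000 := by
  convert hj.card_deficient_le_of_le_card hp hα₀ hα (by positivity) hT using 1
  field_simp
  ring

lemma card_deficient_le_of_quarter_le (hj : IsJumbled G p α) (hp : 0 < p) (hα₀ : 0 ≤ α)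
    (hα : 200 * α ≤ p ^ 2 * Fintype.card V) (hn : 0 < (Fintype.card V : ℝ)) {T : Finset V}
    (hT : p ^ 2 * Fintype.card V / 4 ≤ #T) :
    (#(G.deficient p T) : ℝ) ≤ Fintype.card V / 2500 := by
  convert hj.card_deficient_le_of_le_card hp hα₀ hα (by positivity) hT using 1
  field_simp
  ring

lemma exists_path (hj : IsJumbled G p α) (hp : 0 < p) (hp₁ : p ≤ 1) (hα₀ : 0 ≤ α)
    (hα : 200 * α ≤ p ^ 2 * Fintype.card V) (hpn : 100 ≤ p * Fintype.card V) :
    ∃ c₀ c₁ c₂ c₃ : V, G.Adj c₀ c₁ ∧ G.Adj c₁ c₂ ∧ G.Adj c₂ c₃ ∧ [c₃, c₂, c₁, c₀].Nodup ∧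
      (∀ c ∈ [c₀, c₁, c₂, c₃], c ∉ G.deficient p univ) ∧
      p ^ 2 * Fintype.card V / 4 ≤ #{y | G.Adj c₀ y ∧ G.Adj c₃ y} := by
  have hbad {T : Finset V} := hj.card_deficient_le_of_half_le (T := T) hp hα₀ hα (by positivity)
  have hB := hbad (T := univ) (by rw [card_univ]; nlinarith)
  obtain ⟨c₀, -, h₀, -⟩ := exists_mem_notMem_of_card_add_length_lt (S := univ)
    (B := G.deficient p univ) []
    (by rw [card_univ]; simp only [List.length_nil, Nat.cast_zero]; nlinarith)
  have hd₀ := notMem_deficient_univ.1 h₀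
  obtain ⟨c₁, hc₁, h₁, hc₁l⟩ := exists_mem_notMem_of_card_add_length_lt
    (S := {y | G.Adj c₀ y}) (B := G.deficient p univ) [c₀]
    (by simp only [List.length_cons, List.length_nil]; push_cast; linarith)
  have hd₁ := notMem_deficient_univ.1 h₁
  obtain ⟨c₂, hc₂, h₂, hc₂l⟩ := exists_mem_notMem_of_card_add_length_lt
    (S := {y | G.Adj c₁ y}) (B := G.deficient p univ) [c₁, c₀]
    (by simp only [List.length_cons, List.length_nil]; push_cast; linarith)
  have hd₂ := notMem_deficient_univ.1 h₂
  have hB₀ := hbad hd₀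
  obtain ⟨c₃, hc₃, h₃, hc₃l⟩ := exists_mem_notMem_of_card_add_length_lt
    (S := {y | G.Adj c₂ y}) (B := G.deficient p univ ∪ G.deficient p {y | G.Adj c₀ y})
    [c₂, c₁, c₀] (by
      have := cast_card_union_le (G.deficient p univ) (G.deficient p {y | G.Adj c₀ y})
      simp only [List.length_cons, List.length_nil]; push_cast; linarith)
  rw [mem_union, not_or] at h₃
  simp only [mem_filter, mem_univ, true_and] at hc₁ hc₂ hc₃
  refine ⟨c₀, c₁, c₂, c₃, hc₁, hc₂, hc₃, ?_, ?_, le_card_filter_adj_and_adj hp.le h₀ h₃.2⟩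
  · exact List.nodup_cons.2 ⟨hc₃l, List.nodup_cons.2 ⟨hc₂l, List.nodup_cons.2 ⟨hc₁l,
      List.nodup_singleton _⟩⟩⟩
  · simp [h₀, h₁, h₂, h₃.1]

lemma exists_hexagon_of_path (hj : IsJumbled G p α) (hp : 0 < p) (hα₀ : 0 ≤ α)
    (hα : 200 * α ≤ p ^ 2 * Fintype.card V) (hpn : 100 ≤ p * Fintype.card V) {c₀ c₁ c₂ c₃ : V}
    (hc : [c₃, c₂, c₁, c₀].Nodup) (hd : ∀ c ∈ [c₀, c₁, c₂, c₃], c ∉ G.deficient p univ) :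
    ∃ c₄ c₅ : V, G.Adj c₃ c₄ ∧ G.Adj c₄ c₅ ∧ G.Adj c₀ c₅ ∧ [c₅, c₄, c₃, c₂, c₁, c₀].Nodup ∧
      p ^ 2 * Fintype.card V / 4 ≤ #{y | G.Adj c₁ y ∧ G.Adj c₄ y} ∧
      p ^ 2 * Fintype.card V / 4 ≤ #{y | G.Adj c₂ y ∧ G.Adj c₅ y} := by
  simp only [List.mem_cons, List.not_mem_nil, or_false, forall_eq_or_imp, forall_eq] at hd
  obtain ⟨h₀, h₁, h₂, h₃⟩ := hd
  set l := [c₃, c₂, c₁, c₀]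
  have hsdiff (x y : V) (hx : x ∉ G.deficient p univ) (hy : y ∉ G.deficient p univ) :
      p * Fintype.card V / 4 ≤
        #(({z | G.Adj x z} : Finset V) \ (G.deficient p {z | G.Adj y z} ∪ l.toFinset)) := by
    have h₁ := le_card_sdiff_union_toFinset {z | G.Adj x z} (G.deficient p {z | G.Adj y z}) l
    have h₂ := hj.card_deficient_le_of_half_le hp hα₀ hα (by positivity)
      (notMem_deficient_univ.1 hy)
    have h₃ := notMem_deficient_univ.1 hx
    simp only [l, List.length_cons, List.length_nil] at h₁
    push_cast at h₁
    linarith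
  obtain ⟨c₄, hc₄, c₅, hc₅, h₄₅⟩ := hj.exists_adj_of_le_card hp.le (by positivity)
    (hsdiff c₃ c₁ h₃ h₁) (hsdiff c₀ c₂ h₀ h₂) (by nlinarith)
  simp only [mem_sdiff, mem_union, List.mem_toFinset, mem_filter, mem_univ, true_and,
    not_or] at hc₄ hc₅
  refine ⟨c₄, c₅, hc₄.1, h₄₅, hc₅.1, ?_, le_card_filter_adj_and_adj hp.le h₁ hc₄.2.1,
    le_card_filter_adj_and_adj hp.le h₂ hc₅.2.1⟩
  refine List.nodup_cons.2 ⟨?_, List.nodup_cons.2 ⟨hc₄.2.2, hc⟩⟩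
  rw [List.mem_cons, not_or]
  exact ⟨h₄₅.ne', hc₅.2.2⟩

lemma containsCopy_petersen_of_hexagon (hj : IsJumbled G p α) (hp : 0 < p) (hp₁ : p ≤ 1)
    (hα₀ : 0 ≤ α) (hα : 200 * α ≤ p ^ 2 * Fintype.card V) (hpn : 100 ≤ p ^ 3 * Fintype.card V)
    {c₀ c₁ c₂ c₃ c₄ c₅ : V} (hc : [c₅, c₄, c₃, c₂, c₁, c₀].Nodup) (h₀₁ : G.Adj c₀ c₁)
    (h₁₂ : G.Adj c₁ c₂) (h₂₃ : G.Adj c₂ c₃) (h₃₄ : G.Adj c₃ c₄) (h₄₅ : G.Adj c₄ c₅)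
    (h₀₅ : G.Adj c₀ c₅) (hT₀ : p ^ 2 * Fintype.card V / 4 ≤ #{y | G.Adj c₀ y ∧ G.Adj c₃ y})
    (hT₁ : p ^ 2 * Fintype.card V / 4 ≤ #{y | G.Adj c₁ y ∧ G.Adj c₄ y})
    (hT₂ : p ^ 2 * Fintype.card V / 4 ≤ #{y | G.Adj c₂ y ∧ G.Adj c₅ y}) :
    ContainsCopy petersen G := by
  set T₀ : Finset V := {y | G.Adj c₀ y ∧ G.Adj c₃ y}
  set T₁ : Finset V := {y | G.Adj c₁ y ∧ G.Adj c₄ y}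
  set T₂ : Finset V := {y | G.Adj c₂ y ∧ G.Adj c₅ y}
  have hn : 100 ≤ (Fintype.card V : ℝ) := by nlinarith [pow_le_one₀ hp.le hp₁ (n := 3)]
  have hbad {T : Finset V} :=
    hj.card_deficient_le_of_quarter_le (T := T) hp hα₀ hα (by positivity)
  have hB₀ := hbad hT₀
  have hB₁ := hbad hT₁
  have hB₂ := hbad hT₂
  obtain ⟨z, -, hz, hzl⟩ := exists_mem_notMem_of_card_add_length_lt (S := univ)
    (B := G.deficient p T₀ ∪ G.deficient p T₁ ∪ G.deficient p T₂) [c₅, c₄, c₃, c₂, c₁, c₀] (by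
      have := cast_card_union_le (G.deficient p T₀ ∪ G.deficient p T₁) (G.deficient p T₂)
      have := cast_card_union_le (G.deficient p T₀) (G.deficient p T₁)
      rw [card_univ]
      simp only [List.length_cons, List.length_nil]; push_cast; linarith)
  simp only [mem_union, not_or] at hz
  have hzT {T : Finset V} (hT : p ^ 2 * Fintype.card V / 4 ≤ #T) (hzT : z ∉ G.deficient p T) :
      9 < #{y ∈ T | G.Adj z y} := by
    have := notMem_deficient.1 hzT
    exact_mod_cast (by nlinarith : (9 : ℝ) < #{y ∈ T | G.Adj z y})
  obtain ⟨y₀, hy₀, hy₀l⟩ := exists_mem_notMem_of_length_lt (z :: [c₅, c₄, c₃, c₂, c₁, c₀])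
    (lt_of_le_of_lt (by simp) (hzT hT₀ hz.1.1))
  obtain ⟨y₁, hy₁, hy₁l⟩ := exists_mem_notMem_of_length_lt (y₀ :: z :: [c₅, c₄, c₃, c₂, c₁, c₀])
    (lt_of_le_of_lt (by simp) (hzT hT₁ hz.1.2))
  obtain ⟨y₂, hy₂, hy₂l⟩ := exists_mem_notMem_of_length_lt
    (y₁ :: y₀ :: z :: [c₅, c₄, c₃, c₂, c₁, c₀]) (lt_of_le_of_lt (by simp) (hzT hT₂ hz.2))
  simp only [T₀, T₁, T₂, mem_filter, mem_univ, true_and] at hy₀ hy₁ hy₂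
  refine containsCopy_petersen_of_adj (List.nodup_cons.2 ⟨hy₂l, List.nodup_cons.2 ⟨hy₁l,
    List.nodup_cons.2 ⟨hy₀l, List.nodup_cons.2 ⟨hzl, hc⟩⟩⟩⟩) h₀₁ h₁₂ h₂₃ h₃₄ h₄₅ h₀₅
    hy₀.1 hy₁.1 hy₂.1 ⟨hy₀.2, hy₁.2, hy₂.2⟩

lemma containsCopy_petersen (hj : IsJumbled G p α) (hp₁ : p ≤ 1)
    (hα₀ : 0 ≤ α) (hα : 200 * α ≤ p ^ 2 * Fintype.card V) (hpn : 100 ≤ p ^ 3 * Fintype.card V) :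
    ContainsCopy petersen G := by
  have hn : (0 : ℝ) ≤ Fintype.card V := Nat.cast_nonneg _
  have hp : 0 < p := by
    by_contra! h
    nlinarith [mul_nonpos_of_nonpos_of_nonneg h (mul_nonneg (sq_nonneg p) hn)]
  have hpn' : 100 ≤ p * Fintype.card V := by nlinarith [pow_le_one₀ hp.le hp₁ (n := 2)]
  obtain ⟨c₀, c₁, c₂, c₃, h₀₁, h₁₂, h₂₃, hc, hd, hT₀⟩ := hj.exists_path hp hp₁ hα₀ hα hpn'
  obtain ⟨c₄, c₅, h₃₄, h₄₅, h₀₅, hc', hT₁, hT₂⟩ := hj.exists_hexagon_of_path hp hα₀ hα hpn' hc hd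
  exact hj.containsCopy_petersen_of_hexagon hp hp₁ hα₀ hα hpn hc' h₀₁ h₁₂ h₂₃ h₃₄ h₄₅ h₀₅
    hT₀ hT₁ hT₂

end IsJumbled

lemma sq_le_pow_three_of_rpow_two_thirds_le {x y : ℝ} (hx : 0 ≤ x) (h : x ^ ((2 : ℝ) / 3) ≤ y) :
    x ^ 2 ≤ y ^ 3 :=
  calc x ^ 2 = (x ^ ((2 : ℝ) / 3)) ^ 3 := by rw [← Real.rpow_mul_natCast hx]; norm_num
    _ ≤ y ^ 3 := by gcongr

theorem stmt_3 (C : ℝ) (hC : 0 < C) :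
    ∃ n₀ : ℕ, ∀ (V : Type) [Fintype V] [DecidableEq V]
      (G : SimpleGraph V) [DecidableRel G.Adj] (p α : ℝ),
      0 ≤ p → p ≤ 1 → 0 ≤ α → n₀ ≤ Fintype.card V →
      IsJumbled G p α →
      α ≤ C * Real.sqrt (p * Fintype.card V) →
      (200 * C + 10) ^ ((2 : ℝ) / 3) * (Fintype.card V : ℝ) ^ ((2 : ℝ) / 3) ≤ p * Fintype.card V →
      ContainsCopy petersen G := by
  refine ⟨1, fun V _ _ G _ p α _ hp₁ hα₀ hV hj hαC hpn => ?_⟩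
  set n : ℝ := (Fintype.card V : ℝ)
  have hn : 0 < n := Nat.cast_pos.2 hV
  have hK : (200 * C + 10) ^ 2 ≤ p ^ 3 * n := by
    have h := sq_le_pow_three_of_rpow_two_thirds_le (x := (200 * C + 10) * n) (y := p * n)
      (by positivity)
      (by rwa [Real.mul_rpow (by positivity) hn.le])
    rw [mul_pow, mul_pow, show n ^ 3 = n * n ^ 2 by ring, ← mul_assoc] at h
    exact le_of_mul_le_mul_right h (by positivity)
  have hα : 200 * α ≤ p ^ 2 * n :=
    calc 200 * α ≤ 200 * C * √(p * n) := by linarith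
      _ ≤ √(p ^ 3 * n) * √(p * n) := by gcongr; exact Real.le_sqrt_of_sq_le (by nlinarith)
      _ = p ^ 2 * n := by
        rw [← Real.sqrt_mul (by nlinarith), show p ^ 3 * n * (p * n) = (p ^ 2 * n) ^ 2 by ring,
          Real.sqrt_sq (by positivity)]
  exact hj.containsCopy_petersen hp₁ hα₀ hα (by nlinarith)
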